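/- arXiv:1612.08535 — 5 statements merged into one kernel-verified Lean document; each statement's English description precedes it below -/
import Mathlib

section
/- Let 1 ≤ ℓ ≤ m ≤ N. Let f₁, …, f_m : ℝ^N → ℝ be real-analytic functions, each invariant under translations in the directions e₁, …, e_m, and suppose f_ℓ is not a constant function. Let H be the vector field H(x) = Σ_{i=1}^m f_i(x)·e_i, let V : ℝ^N → ℝ^N be a real-analytic vector field invariant under translations in the directions e₁, …, e_m, and let X be the vector field X(x) = exp(x_ℓ)·V(x). If [H, X] = λ·X for some λ ∈ ℝ, then V is identically zero. -/
/-! Since `V` is invariant along the `e_i`, `DV(H) = 0`, and the Leibniz rule gives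
`[H, e^{x_ℓ} V] = e^{x_ℓ} (f_ℓ V - DH(V))`. So wherever `V x ≠ 0`, the bracket relation makes
`V x` an eigenvector of `DH(x)` with eigenvalue `f_ℓ(x) - λ`. As every `f_i` is invariant along
every `e_j` (`i, j ≤ m`), `DH(x)` kills the `e_j` while taking values in their span, so
`DH(x)² = 0` and that eigenvalue vanishes. Hence `f_ℓ = λ` on the open set `{V ≠ 0}`, and by
analyticity `f_ℓ ≡ λ` as soon as this set is nonempty. -/

section Invariance

variable {𝕜 E F ι : Type*} [NontriviallyNormedField 𝕜] [NormedAddCommGroup E] [NormedSpace 𝕜 E]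
  [NormedAddCommGroup F] [NormedSpace 𝕜 F]

theorem fderiv_apply_eq_zero_of_forall_add_smul_eq {g : E → F} {x v : E}
    (hg : DifferentiableAt 𝕜 g x) (hinv : ∀ t : 𝕜, g (x + t • v) = g x) :
    fderiv 𝕜 g x v = 0 := by
  have hline : HasDerivAt (fun t : 𝕜 => x + t • v) v 0 := by
    simpa using ((hasDerivAt_id (0 : 𝕜)).smul_const v).const_add x
  have hcomp : HasDerivAt (fun t : 𝕜 => g (x + t • v)) (fderiv 𝕜 g x v) 0 :=
    hg.hasFDerivAt.comp_hasDerivAt_of_eq 0 hline (by simp)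
  rw [funext hinv] at hcomp
  exact hcomp.unique (hasDerivAt_const _ _)

theorem fderiv_sum_smul_const_apply {f : ι → E → 𝕜} {v : ι → F} {s : Finset ι} {x : E}
    (hf : ∀ i ∈ s, DifferentiableAt 𝕜 (f i) x) (w : E) :
    fderiv 𝕜 (fun y => ∑ i ∈ s, f i y • v i) x w = ∑ i ∈ s, fderiv 𝕜 (f i) x w • v i := by
  have hH : HasFDerivAt (fun y => ∑ i ∈ s, f i y • v i)
      (∑ i ∈ s, (fderiv 𝕜 (f i) x).smulRight (v i)) x :=
    HasFDerivAt.fun_sum fun i hi => (hf i hi).hasFDerivAt.smul_const (v i)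
  simp [hH.fderiv]

theorem fderiv_sum_smul_const_comp_self {f : ι → E → 𝕜} {v : ι → E} {s : Finset ι} {x : E}
    (hf : ∀ i ∈ s, DifferentiableAt 𝕜 (f i) x)
    (hinv : ∀ i ∈ s, ∀ j ∈ s, ∀ t : 𝕜, f i (x + t • v j) = f i x) (w : E) :
    fderiv 𝕜 (fun y => ∑ i ∈ s, f i y • v i) x
      (fderiv 𝕜 (fun y => ∑ i ∈ s, f i y • v i) x w) = 0 := by
  have hkill : ∀ j ∈ s, fderiv 𝕜 (fun y => ∑ i ∈ s, f i y • v i) x (v j) = 0 := fun j hj => by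
    rw [fderiv_sum_smul_const_apply hf]
    exact Finset.sum_eq_zero fun i hi => by
      rw [fderiv_apply_eq_zero_of_forall_add_smul_eq (hf i hi) (hinv i hi j hj), zero_smul]
  rw [fderiv_sum_smul_const_apply hf w, map_sum]
  exact Finset.sum_eq_zero fun j hj => by rw [map_smul, hkill j hj, smul_zero]

theorem fderiv_apply_sum_smul_eq_zero {g : E → F} {v : ι → E} {s : Finset ι} {x : E}
    (hg : DifferentiableAt 𝕜 g x) (hinv : ∀ j ∈ s, ∀ t : 𝕜, g (x + t • v j) = g x) (c : ι → 𝕜) :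
    fderiv 𝕜 g x (∑ j ∈ s, c j • v j) = 0 := by
  rw [map_sum]
  exact Finset.sum_eq_zero fun j hj => by
    rw [map_smul, fderiv_apply_eq_zero_of_forall_add_smul_eq hg (hinv j hj), smul_zero]

end Invariance

theorem eq_zero_of_apply_eq_smul_of_comp_self_eq_zero {K M : Type*} [Field K] [AddCommGroup M]
    [Module K M] {T : M →ₗ[K] M} (hT : ∀ w, T (T w) = 0) {c : K} {w : M}
    (hw : T w = c • w) (hw₀ : w ≠ 0) : c = 0 := by
  have hnil : IsNilpotent T := ⟨2, LinearMap.ext fun w => by simp [sq, hT]⟩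
  exact (Module.End.hasEigenvalue_of_hasEigenvector ⟨Module.End.mem_eigenspace_iff.mpr hw, hw₀⟩
    |>.isNilpotent_of_isNilpotent hnil).eq_zero

theorem fderiv_exp_eval_apply {ι : Type*} [Fintype ι] (L : ι) (x w : ι → ℝ) :
    fderiv ℝ (fun y : ι → ℝ => Real.exp (y L)) x w = Real.exp (x L) * w L := by
  have h : HasFDerivAt (fun y : ι → ℝ => Real.exp (y L))
      (Real.exp (x L) • (ContinuousLinearMap.proj L : (ι → ℝ) →L[ℝ] ℝ)) x :=
    (ContinuousLinearMap.proj L : (ι → ℝ) →L[ℝ] ℝ).hasFDerivAt.exp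
  simp [h.fderiv]

theorem fderiv_apply_eq_smul_of_lieBracket_exp_smul_eq {ι : Type*} [Fintype ι]
    {H V : (ι → ℝ) → ι → ℝ} {L : ι} {lam : ℝ} {x : ι → ℝ}
    (hV : DifferentiableAt ℝ V x) (hVH : fderiv ℝ V x (H x) = 0)
    (hbr : VectorField.lieBracket ℝ H (fun y => Real.exp (y L) • V y) x
      = lam • (Real.exp (x L) • V x)) :
    fderiv ℝ H x (V x) = (H x L - lam) • V x := by
  have hexp : DifferentiableAt ℝ (fun y : ι → ℝ => Real.exp (y L)) x := by fun_prop
  rw [VectorField.lieBracket_smul_right hexp hV, VectorField.lieBracket, hVH,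
    fderiv_exp_eval_apply, zero_sub, smul_neg, mul_smul, ← sub_eq_add_neg, ← smul_sub,
    smul_comm lam] at hbr
  have := smul_right_injective _ (Real.exp_ne_zero (x L)) hbr
  rw [sub_smul]
  linear_combination (norm := module) -this

/-- Let `1 ≤ ℓ ≤ m ≤ N`, let `f₁, …, f_m` be real-analytic functions on `ℝ^N`, invariant
under translations in the directions `e₁, …, e_m`, with `f_ℓ` non-constant, and let
`H = Σ_{i ≤ m} f_i • e_i`.  If `V` is a real-analytic vector field invariant under
translations in the directions `e₁, …, e_m` and the field `X x = exp (x_ℓ) • V x`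
satisfies `[H, X] = λ • X`, then `V ≡ 0`. -/
theorem eigenfield_of_nonconstant_coefficient_vanishes
    (N ℓ m : ℕ) (hℓ : 1 ≤ ℓ) (hℓm : ℓ ≤ m) (hmN : m ≤ N)
    (f : Fin N → (Fin N → ℝ) → ℝ)
    (hfA : ∀ i : Fin N, (i : ℕ) < m → ∀ x, AnalyticAt ℝ (f i) x)
    (hfInv : ∀ i j : Fin N, (i : ℕ) < m → (j : ℕ) < m → ∀ (x : Fin N → ℝ) (t : ℝ),
      f i (x + t • (Pi.single j (1 : ℝ) : Fin N → ℝ)) = f i x)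
    (hfl : ¬ ∃ c : ℝ, ∀ x, f ⟨ℓ - 1, by omega⟩ x = c)
    (V : (Fin N → ℝ) → (Fin N → ℝ))
    (hVA : ∀ x, AnalyticAt ℝ V x)
    (hVInv : ∀ j : Fin N, (j : ℕ) < m → ∀ (x : Fin N → ℝ) (t : ℝ),
      V (x + t • (Pi.single j (1 : ℝ) : Fin N → ℝ)) = V x)
    (lam : ℝ)
    (hbr : VectorField.lieBracket ℝ
        (fun x => ∑ i ∈ Finset.univ.filter (fun i : Fin N => (i : ℕ) < m),
          f i x • (Pi.single i (1 : ℝ) : Fin N → ℝ))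
        (fun x => Real.exp (x ⟨ℓ - 1, by omega⟩) • V x)
      = fun x => lam • (Real.exp (x ⟨ℓ - 1, by omega⟩) • V x)) :
    ∀ x, V x = 0 := by
  set L : Fin N := ⟨ℓ - 1, by omega⟩
  set s := Finset.univ.filter (fun i : Fin N => (i : ℕ) < m)
  set H := fun x => ∑ i ∈ s, f i x • (Pi.single i (1 : ℝ) : Fin N → ℝ)
  have hs : ∀ {i}, i ∈ s → (i : ℕ) < m := fun hi => (Finset.mem_filter.mp hi).2
  have hLs : L ∈ s := by simp [s, L]; omega
  have hconst : ∀ x, V x ≠ 0 → f L x = lam := fun x hx => by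
    have hVH : fderiv ℝ V x (H x) = 0 := fderiv_apply_sum_smul_eq_zero (hVA x).differentiableAt
      (fun j hj => hVInv j (hs hj) x) _
    have heig := fderiv_apply_eq_smul_of_lieBracket_exp_smul_eq (hVA x).differentiableAt hVH
      (congrFun hbr x)
    have hHL : H x L = f L x := by simp [H, Pi.single_apply, hLs]
    rw [hHL] at heig
    have hsq : ∀ w, fderiv ℝ H x (fderiv ℝ H x w) = 0 :=
      fderiv_sum_smul_const_comp_self (fun i hi => (hfA i (hs hi) x).differentiableAt)
        fun i hi j hj => hfInv i j (hs hi) (hs hj) x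
    exact sub_eq_zero.mp <| eq_zero_of_apply_eq_smul_of_comp_self_eq_zero
      (T := (fderiv ℝ H x : (Fin N → ℝ) →ₗ[ℝ] Fin N → ℝ)) hsq heig hx
  intro x₀
  by_contra hx₀
  have hVcont : Continuous V := continuous_iff_continuousAt.mpr fun y => (hVA y).continuousAt
  have hlocal : f L =ᶠ[nhds x₀] fun _ => lam :=
    Filter.eventually_of_mem ((isOpen_compl_singleton.preimage hVcont).mem_nhds hx₀) hconst
  exact hfl ⟨lam, congrFun (AnalyticOnNhd.eq_of_eventuallyEq (fun y _ => hfA L (hs hLs) y)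
    (fun _ _ => analyticAt_const) hlocal)⟩
end

section
/- Let N ≥ 2, let U', V' ∈ ℝ^N be vectors whose first two components vanish, let a, b, c, d ∈ ℝ with a ≠ 0 and d ≠ 0, and set U = a·e₁ + b·e₂ + U' and V = c·e₁ + d·e₂ + V'. Consider the vector fields X_α(x) = exp(x₁)·U and X_β(x) = exp(x₂)·V on ℝ^N. If [X_α, X_β] ≠ 0, [[X_α, X_β], X_α] = 0 and [[X_α, X_β], X_β] = 0 (the bracket relations of simple root vectors in a root system of type A₂), then either (b = 0 and c = −d) or (b = −a and c = 0); that is, up to nonzero constant multiples, X_α = exp(x₁)(∂₁ + U₁) and X_β = exp(x₂)(∂₁ − ∂₂ + V₁), or X_α = exp(x₁)(∂₁ − ∂₂ + U₁) and X_β = exp(x₂)(∂₂ + V₁), with U₁, V₁ constant vector fields whose first two components vanish. -/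
/-! The brackets of fields `exp (f x) • u` with `f` linear and `u` constant are again of this
form: `[e^f u, e^g v] = e^(f+g) (g(u) v − f(v) u)`. So the three bracket relations reduce to
linear algebra for `W = g(u) v − f(v) u`: `W ≠ 0`, `f(W) u = (f+g)(u) W` and
`g(W) v = (f+g)(v) W`. Applying `f` to the second shows `g(u) = 0` or `f(W) = 0`, and in the
latter case `g(u) = −f(u)`; symmetrically `f(v) = 0` or `f(v) = −g(v)`. Of the four
combinations, `g(u) = f(v) = 0` forces `W = 0`, and `g(u) = −f(u), f(v) = −g(v)` gives
`f(W) = 2 f(u) g(v) ≠ 0`. -/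

section LinearAlgebra

variable {K E : Type*} [Field K] [AddCommGroup E] [Module K E]

theorem eq_zero_or_apply_eq_zero_of_apply_smul_eq (φ : E →ₗ[K] K) {u w : E} {β : K}
    (h : φ w • u = (φ u + β) • w) : β = 0 ∨ φ w = 0 := by
  have hφ := congrArg φ h
  simp only [map_smul, smul_eq_mul] at hφ
  exact mul_eq_zero.mp (by linear_combination -hφ)

theorem root_coefficients_of_sl3_relations [CharZero K] (f g : E →ₗ[K] K) {u v : E}
    (hu : f u ≠ 0) (hv : g v ≠ 0) (hW : g u • v - f v • u ≠ 0)
    (h₁ : f (g u • v - f v • u) • u = (f u + g u) • (g u • v - f v • u))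
    (h₂ : g (g u • v - f v • u) • v = (f v + g v) • (g u • v - f v • u)) :
    (g u = 0 ∧ f v = -g v) ∨ (g u = -f u ∧ f v = 0) := by
  set W := g u • v - f v • u with hW_def
  have coeff_eq_zero {x : K} (hx : x • W = 0) : x = 0 := (smul_eq_zero.mp hx).resolve_right hW
  rw [add_comm (f v)] at h₂
  rcases eq_zero_or_apply_eq_zero_of_apply_smul_eq f h₁ with hb | hfW <;>
    rcases eq_zero_or_apply_eq_zero_of_apply_smul_eq g h₂ with hc | hgW
  · exact absurd (by simp [hW_def, hb, hc]) hW
  · rw [hgW, zero_smul] at h₂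
    exact .inl ⟨hb, by linear_combination coeff_eq_zero h₂.symm⟩
  · rw [hfW, zero_smul] at h₁
    exact .inr ⟨by linear_combination coeff_eq_zero h₁.symm, hc⟩
  · rw [hfW, zero_smul] at h₁
    rw [hgW, zero_smul] at h₂
    have hb : g u = -f u := by linear_combination coeff_eq_zero h₁.symm
    have hc : f v = -g v := by linear_combination coeff_eq_zero h₂.symm
    have hfW_eq : f W = 2 * f u * g v := by
      simp only [hW_def, map_sub, map_smul, smul_eq_mul, hb, hc]
      ring
    exact absurd (hfW ▸ hfW_eq) (by simp [hu, hv])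

end LinearAlgebra

section ExpFields

variable {E : Type*} [NormedAddCommGroup E] [NormedSpace ℝ E]

theorem lieBracket_exp_smul_const (f g : E →L[ℝ] ℝ) (u v : E) :
    VectorField.lieBracket ℝ (fun y => Real.exp (f y) • u) (fun y => Real.exp (g y) • v)
      = fun y => Real.exp ((f + g) y) • (g u • v - f v • u) := by
  funext x
  rw [VectorField.lieBracket, ((f.hasFDerivAt.exp).smul_const u).fderiv,
    ((g.hasFDerivAt.exp).smul_const v).fderiv]
  simp only [ContinuousLinearMap.smulRight_apply, smul_apply,
    add_apply, smul_eq_mul, map_smul, Real.exp_add]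
  module

theorem lieBracket_exp_smul_const_eq_zero_iff (f g : E →L[ℝ] ℝ) (u v : E) :
    VectorField.lieBracket ℝ (fun y => Real.exp (f y) • u) (fun y => Real.exp (g y) • v) = 0
      ↔ g u • v - f v • u = 0 := by
  rw [lieBracket_exp_smul_const, funext_iff]
  exact ⟨fun h => by simpa using h 0, fun h y => by simp [h]⟩

end ExpFields

/-- If `X_α x = exp (x₁) • (a e₁ + b e₂ + U')` and `X_β x = exp (x₂) • (c e₁ + d e₂ + V')`,
with `a, d ≠ 0` and `U', V'` supported outside the first two coordinates, satisfy the
`A₂`-type bracket relations `[X_α, X_β] ≠ 0`, `[[X_α, X_β], X_α] = 0` and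
`[[X_α, X_β], X_β] = 0`, then `(b = 0 ∧ c = −d)` or `(b = −a ∧ c = 0)`; that is, up to
nonzero constant multiples, `X_α = exp (x₁)(∂₁ + U₁)`, `X_β = exp (x₂)(∂₁ − ∂₂ + V₁)`
or `X_α = exp (x₁)(∂₁ − ∂₂ + U₁)`, `X_β = exp (x₂)(∂₂ + V₁)`. -/
theorem sl3_simple_root_vectors_normal_form (N : ℕ) (hN : 2 ≤ N)
    (U' V' : Fin N → ℝ)
    (hU'0 : U' ⟨0, by omega⟩ = 0) (hU'1 : U' ⟨1, by omega⟩ = 0)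
    (hV'0 : V' ⟨0, by omega⟩ = 0) (hV'1 : V' ⟨1, by omega⟩ = 0)
    (a b c d : ℝ) (ha : a ≠ 0) (hd : d ≠ 0)
    (Xα Xβ : (Fin N → ℝ) → (Fin N → ℝ))
    (hXα : Xα = fun x => Real.exp (x ⟨0, by omega⟩) •
      (a • (Pi.single (⟨0, by omega⟩ : Fin N) (1 : ℝ) : Fin N → ℝ)
        + b • (Pi.single (⟨1, by omega⟩ : Fin N) (1 : ℝ) : Fin N → ℝ) + U'))
    (hXβ : Xβ = fun x => Real.exp (x ⟨1, by omega⟩) •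
      (c • (Pi.single (⟨0, by omega⟩ : Fin N) (1 : ℝ) : Fin N → ℝ)
        + d • (Pi.single (⟨1, by omega⟩ : Fin N) (1 : ℝ) : Fin N → ℝ) + V'))
    (hne : VectorField.lieBracket ℝ Xα Xβ ≠ 0)
    (h1 : VectorField.lieBracket ℝ (VectorField.lieBracket ℝ Xα Xβ) Xα = 0)
    (h2 : VectorField.lieBracket ℝ (VectorField.lieBracket ℝ Xα Xβ) Xβ = 0) :
    (b = 0 ∧ c = -d) ∨ (b = -a ∧ c = 0) := by
  set i₀ : Fin N := ⟨0, by omega⟩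
  set i₁ : Fin N := ⟨1, by omega⟩
  have h01 : i₀ ≠ i₁ := by simp [i₀, i₁, Fin.ext_iff]
  set f := ContinuousLinearMap.proj (R := ℝ) (φ := fun _ : Fin N => ℝ) i₀
  set g := ContinuousLinearMap.proj (R := ℝ) (φ := fun _ : Fin N => ℝ) i₁
  set u := a • Pi.single i₀ (1 : ℝ) + b • Pi.single i₁ (1 : ℝ) + U'
  set v := c • Pi.single i₀ (1 : ℝ) + d • Pi.single i₁ (1 : ℝ) + V'
  have hfu : f u = a := by simp [f, u, h01, hU'0]
  have hgu : g u = b := by simp [g, u, h01.symm, hU'1]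
  have hfv : f v = c := by simp [f, v, h01, hV'0]
  have hgv : g v = d := by simp [g, v, h01.symm, hV'1]
  replace hXα : Xα = fun y => Real.exp (f y) • u := hXα
  replace hXβ : Xβ = fun y => Real.exp (g y) • v := hXβ
  subst hXα hXβ
  rw [Ne, lieBracket_exp_smul_const_eq_zero_iff] at hne
  rw [lieBracket_exp_smul_const, lieBracket_exp_smul_const_eq_zero_iff, sub_eq_zero] at h1 h2
  have := root_coefficients_of_sl3_relations (f : (Fin N → ℝ) →ₗ[ℝ] ℝ) g
    (hfu ▸ ha) (hgv ▸ hd) hne h1 h2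
  rwa [ContinuousLinearMap.coe_coe, ContinuousLinearMap.coe_coe, hfu, hgu, hfv, hgv] at this
end

section
/- Let F, G : ℝ⁵ → ℝ be continuously differentiable functions and let M = {(x, y, z, p, r, q, s) ∈ ℝ⁷ : q = F(x, y, z, p, r) and s = G(x, y, z, p, r)}. Consider the six vector fields on ℝ⁷: Y₁ = ∂_x, Y₂ = ∂_y, Y₃ = ∂_z, Y₄ = x·∂_y + ∂_p, Y₅ = y·∂_z + p·∂_r + q·∂_s, and Y₆ = y·∂_x − p²·∂_p − pr·∂_r − 3pq·∂_q − (qr + 2ps)·∂_s. If for each i = 1, …, 6 the directional derivatives of both functions q − F(x, y, z, p, r) and s − G(x, y, z, p, r) along Y_i vanish at every point of M, then F and G are identically zero. -/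
/-!
Restrict to the point of `M` over `v = (x, y, z, p, r)`. For `q - F`, the fields `∂_x, ∂_y, ∂_z`
and `x ∂_y + ∂_p` kill `∂F/∂x, ∂F/∂y, ∂F/∂z, ∂F/∂p`; then `Y₅` gives `p ∂F/∂r = 0` and `Y₆`
collapses to `3 p F = 0`. For `s - G` the same steps give `p ∂G/∂r = F` from `Y₅`, and the
`q r` term of `Y₆` cancels against it, leaving `2 p G = 0`. Hence `p F = p G = 0` everywhere,
and continuity extends `F = G = 0` across the hyperplane `p = 0`.
-/

def baseCoords : (Fin 7 → ℝ) →L[ℝ] (Fin 5 → ℝ) :=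
  ContinuousLinearMap.pi fun k => ContinuousLinearMap.proj (Fin.castLE (by norm_num) k)

theorem baseCoords_apply (u : Fin 7 → ℝ) : baseCoords u = ![u 0, u 1, u 2, u 3, u 4] := by
  funext k; fin_cases k <;> rfl

theorem ContinuousLinearMap.apply_eq_sum_mul_single {ι R : Type*} [Fintype ι] [DecidableEq ι]
    [CommSemiring R] [TopologicalSpace R] (L : (ι → R) →L[R] R) (y : ι → R) :
    L y = ∑ k, y k * L (Pi.single k 1) := by
  conv_lhs => rw [pi_eq_sum_univ' y, map_sum]
  simp only [map_smul, smul_eq_mul]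

theorem fderiv_coord_sub_comp_baseCoords {H : (Fin 5 → ℝ) → ℝ} {w : Fin 7 → ℝ}
    (hH : DifferentiableAt ℝ H (baseCoords w)) (j : Fin 7) (y : Fin 7 → ℝ) :
    fderiv ℝ (fun u => u j - H ![u 0, u 1, u 2, u 3, u 4]) w y =
      y j - ∑ k, baseCoords y k * fderiv ℝ H (baseCoords w) (Pi.single k 1) := by
  simp_rw [← baseCoords_apply]
  have hd : HasFDerivAt (fun u => u j - H (baseCoords u))
      (ContinuousLinearMap.proj j - (fderiv ℝ H (baseCoords w)).comp baseCoords) w :=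
    (ContinuousLinearMap.proj j).hasFDerivAt.sub (hH.hasFDerivAt.comp w baseCoords.hasFDerivAt)
  rw [hd.fderiv, ← ContinuousLinearMap.apply_eq_sum_mul_single]
  rfl

theorem eq_zero_of_coord_mul_eq_zero {ι : Type*} {H : (ι → ℝ) → ℝ} (hH : Continuous H) (i : ι)
    (h : ∀ v, v i * H v = 0) (v : ι → ℝ) : H v = 0 := by
  have hdense : Dense {v : ι → ℝ | v i ≠ 0} :=
    (dense_compl_singleton (0 : ℝ)).preimage (isOpenMap_eval i)
  refine congrFun (hH.ext_on hdense continuous_const fun u hu => ?_) v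
  exact (mul_eq_zero.mp (h u)).resolve_left hu

/-- If the submanifold `q = F(x, y, z, p, r)`, `s = G(x, y, z, p, r)` of `ℝ⁷` (the second
prolongation space of `ℝ³`, with `p = y'`, `r = z'`, `q = y''`, `s = z''`) is invariant
under the six vector fields `∂_x`, `∂_y`, `∂_z`, `x ∂_y + ∂_p`, `y ∂_z + p ∂_r + q ∂_s`
and `y ∂_x − p² ∂_p − p r ∂_r − 3 p q ∂_q − (q r + 2 p s) ∂_s` (second prolongations of
generators of the `sl(4, ℝ)` symmetry algebra of `y'' = 0 = z''`), then `F ≡ 0` and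
`G ≡ 0`, i.e. the system is `y'' = 0 = z''`. -/
theorem sl4_invariant_second_order_system_is_trivial
    (F G : (Fin 5 → ℝ) → ℝ) (hF : ContDiff ℝ 1 F) (hG : ContDiff ℝ 1 G)
    (M : Set (Fin 7 → ℝ))
    (hM : M = {w | w 5 = F ![w 0, w 1, w 2, w 3, w 4] ∧ w 6 = G ![w 0, w 1, w 2, w 3, w 4]})
    (Y : Fin 6 → ((Fin 7 → ℝ) → (Fin 7 → ℝ)))
    (hY : Y = ![fun _ => ![1, 0, 0, 0, 0, 0, 0], fun _ => ![0, 1, 0, 0, 0, 0, 0],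
      fun _ => ![0, 0, 1, 0, 0, 0, 0],
      fun w => ![0, w 0, 0, 1, 0, 0, 0],
      fun w => ![0, 0, w 1, 0, w 3, 0, w 5],
      fun w => ![w 1, 0, 0, -(w 3 ^ 2), -(w 3 * w 4), -(3 * w 3 * w 5),
        -(w 5 * w 4 + 2 * w 3 * w 6)]])
    (hinv : ∀ i : Fin 6, ∀ w ∈ M,
      fderiv ℝ (fun u => u 5 - F ![u 0, u 1, u 2, u 3, u 4]) w (Y i w) = 0 ∧
      fderiv ℝ (fun u => u 6 - G ![u 0, u 1, u 2, u 3, u 4]) w (Y i w) = 0) :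
    ∀ v, F v = 0 ∧ G v = 0 := by
  subst hY hM
  have hmul : ∀ v, v 3 * F v = 0 ∧ v 3 * G v = 0 := by
    intro v
    set w : Fin 7 → ℝ := ![v 0, v 1, v 2, v 3, v 4, F v, G v]
    have hw : baseCoords w = v := by funext k; fin_cases k <;> rfl
    have hwM : w 5 = F ![w 0, w 1, w 2, w 3, w 4] ∧ w 6 = G ![w 0, w 1, w 2, w 3, w 4] := by
      simp only [← baseCoords_apply, hw]; exact ⟨rfl, rfl⟩
    have heqs := fun i => hinv i w hwM
    simp only [fderiv_coord_sub_comp_baseCoords (hF.differentiable one_ne_zero _),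
      fderiv_coord_sub_comp_baseCoords (hG.differentiable one_ne_zero _), hw,
      baseCoords_apply, Fin.sum_univ_five, Fin.forall_fin_succ, IsEmpty.forall_iff, and_true,
      w, Matrix.cons_val, Fin.isValue, Fin.succ_zero_eq_one, Fin.succ_one_eq_two,
      Fin.reduceSucc] at heqs
    obtain ⟨⟨hF₁, hG₁⟩, ⟨hF₂, hG₂⟩, ⟨hF₃, hG₃⟩, ⟨hF₄, hG₄⟩, ⟨hF₅, hG₅⟩, hF₆, hG₆⟩ := heqs
    constructor
    · linear_combination (-1/3) * hF₆ + (v 1 / 3) * hF₁ - (v 3 ^ 2 / 3) * hF₄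
        + (v 3 ^ 2 * v 0 / 3) * hF₂ - (v 4 / 3) * hF₅ + (v 4 * v 1 / 3) * hF₃
    · linear_combination (-1/2) * hG₆ - (v 4 / 2) * hG₅ + (v 1 / 2) * hG₁ - (v 3 ^ 2 / 2) * hG₄
        + (v 3 ^ 2 * v 0 / 2) * hG₂ + (v 4 * v 1 / 2) * hG₃
  exact fun v => ⟨eq_zero_of_coord_mul_eq_zero hF.continuous 3 (fun u => (hmul u).1) v,
    eq_zero_of_coord_mul_eq_zero hG.continuous 3 (fun u => (hmul u).2) v⟩
end

section
/- The map Ψ : ℝ² → ℝ² defined by Ψ(x, y) = (−e^{−x}, −e^{−x−y}) is a real-analytic diffeomorphism from ℝ² onto the open quadrant {(u, v) ∈ ℝ² : u < 0, v < 0}, and at every point p = (x, y) its derivative satisfies DΨ(p)(e^{x}·(e₁ − e₂)) = e₁ and DΨ(p)(e^{x+y}·e₂) = e₂. In other words, Ψ provides canonical coordinates in which the two commuting vector fields e^{x}(∂_x − ∂_y) and e^{x+y}∂_y become the coordinate vector fields ∂_u and ∂_v. -/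
set_option maxHeartbeats 1000000
set_option synthInstance.maxHeartbeats 400000

noncomputable section

/-!
`Ψ` is inverted on the quadrant by `Θ(u, v) = (−log(−u), log(−u) − log(−v))`, which is analytic
there because `log` is analytic on `(0, ∞)`. By the chain rule
`DΨ(x, y)(a, b) = (e^{−x} a, e^{−x−y} (a + b))`, so the two fields are sent to `e₁` and `e₂`.
-/

open Real Set

@[fun_prop]
theorem analyticAt_apply {𝕜 ι : Type*} [NontriviallyNormedField 𝕜] [Fintype ι] (i : ι)
    (p : ι → 𝕜) : AnalyticAt 𝕜 (fun x : ι → 𝕜 => x i) p :=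
  (ContinuousLinearMap.proj (R := 𝕜) i).analyticAt p

namespace CanonicalCoords

def negQuadrant : Set (Fin 2 → ℝ) := {w | w 0 < 0 ∧ w 1 < 0}

def chart (p : Fin 2 → ℝ) : Fin 2 → ℝ := ![-exp (-p 0), -exp (-(p 0 + p 1))]

def chartInv (w : Fin 2 → ℝ) : Fin 2 → ℝ := ![-log (-w 0), log (-w 0) - log (-w 1)]

theorem analyticAt_chart (p : Fin 2 → ℝ) : AnalyticAt ℝ chart p := by
  refine AnalyticAt.pi fun i => ?_
  fin_cases i <;>
    simp only [chart, Fin.zero_eta, Fin.mk_one, Matrix.cons_val_zero, Matrix.cons_val_one] <;>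
    fun_prop

theorem analyticAt_chartInv {w : Fin 2 → ℝ} (hw : w ∈ negQuadrant) :
    AnalyticAt ℝ chartInv w := by
  obtain ⟨hw0, hw1⟩ := hw
  refine AnalyticAt.pi fun i => ?_
  fin_cases i <;>
    simp only [chartInv, Fin.zero_eta, Fin.mk_one, Matrix.cons_val_zero, Matrix.cons_val_one] <;>
    fun_prop (disch := linarith)

theorem chartInv_chart (p : Fin 2 → ℝ) : chartInv (chart p) = p := by
  ext i
  fin_cases i <;> simp [chart, chartInv]

theorem chart_chartInv {w : Fin 2 → ℝ} (hw : w ∈ negQuadrant) : chart (chartInv w) = w := by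
  obtain ⟨hw0, hw1⟩ := hw
  ext i
  fin_cases i <;> simp [chart, chartInv, exp_log_of_neg hw0, exp_log_of_neg hw1]

theorem mapsTo_chart : MapsTo chart univ negQuadrant := fun p _ =>
  ⟨by simp [chart, exp_pos], by simp [chart, exp_pos]⟩

theorem bijOn_chart : BijOn chart univ negQuadrant :=
  InvOn.bijOn ⟨fun p _ => chartInv_chart p, fun _ hw => chart_chartInv hw⟩ mapsTo_chart
    (mapsTo_univ _ _)

theorem fderiv_chart_apply (p v : Fin 2 → ℝ) :
    fderiv ℝ chart p v = ![exp (-p 0) * v 0, exp (-(p 0 + p 1)) * (v 0 + v 1)] := by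
  ext i
  have hi : fderiv ℝ chart p v i = fderiv ℝ (fun x => chart x i) p v := by
    rw [fderiv_apply (analyticAt_chart p).differentiableAt]
    rfl
  rw [hi]
  fin_cases i
  · have h : HasFDerivAt (fun x => chart x 0) _ p := (hasFDerivAt_apply 0 p).neg.exp.neg
    simp [h.fderiv]
  · have h : HasFDerivAt (fun x => chart x 1) _ p :=
      ((hasFDerivAt_apply 0 p).add (hasFDerivAt_apply 1 p)).neg.exp.neg
    simp [h.fderiv, mul_add, add_comm]

theorem fderiv_chart_first_field (p : Fin 2 → ℝ) :
    fderiv ℝ chart p (exp (p 0) • (Pi.single 0 1 - Pi.single 1 1)) = Pi.single 0 1 := by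
  rw [fderiv_chart_apply]
  ext i
  fin_cases i <;> simp [← exp_add]

theorem fderiv_chart_second_field (p : Fin 2 → ℝ) :
    fderiv ℝ chart p (exp (p 0 + p 1) • Pi.single 1 1) = Pi.single 1 1 := by
  rw [fderiv_chart_apply]
  ext i
  fin_cases i <;> simp [← exp_add]

end CanonicalCoords

/-- The map `Ψ(x,y) = (−e^{−x}, −e^{−x−y})` is a real-analytic diffeomorphism of `ℝ²` onto
the open quadrant `{u < 0, v < 0}`, and it carries the two commuting vector fields
`e^{x}(∂_x − ∂_y)` and `e^{x+y}∂_y` to the coordinate vector fields `∂_u` and `∂_v`. -/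
theorem canonical_coordinates_sl3_abelian
    (Ψ : (Fin 2 → ℝ) → (Fin 2 → ℝ))
    (hΨ : Ψ = fun p => ![-(Real.exp (-(p 0))), -(Real.exp (-(p 0 + p 1)))])
    (Q : Set (Fin 2 → ℝ)) (hQ : Q = {w | w 0 < 0 ∧ w 1 < 0}) :
    (∀ p, AnalyticAt ℝ Ψ p) ∧
    Set.BijOn Ψ Set.univ Q ∧
    (∃ Θ : (Fin 2 → ℝ) → (Fin 2 → ℝ),
      (∀ w ∈ Q, AnalyticAt ℝ Θ w) ∧ (∀ p, Θ (Ψ p) = p) ∧ (∀ w ∈ Q, Ψ (Θ w) = w)) ∧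
    (∀ p, fderiv ℝ Ψ p (Real.exp (p 0) •
          ((Pi.single 0 (1 : ℝ) : Fin 2 → ℝ) - (Pi.single 1 (1 : ℝ) : Fin 2 → ℝ)))
        = (Pi.single 0 (1 : ℝ) : Fin 2 → ℝ)) ∧
    (∀ p, fderiv ℝ Ψ p (Real.exp (p 0 + p 1) • (Pi.single 1 (1 : ℝ) : Fin 2 → ℝ))
        = (Pi.single 1 (1 : ℝ) : Fin 2 → ℝ)) := by
  open CanonicalCoords in
  obtain rfl : Ψ = chart := hΨ
  obtain rfl : Q = negQuadrant := hQ
  exact ⟨analyticAt_chart, bijOn_chart,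
    ⟨chartInv, fun _ => analyticAt_chartInv, chartInv_chart, fun _ => chart_chartInv⟩,
    fderiv_chart_first_field, fderiv_chart_second_field⟩

end
end

section
/- The three smooth vector fields on ℝ³ given by X₁(x, y, z) = e^{x+y+z}·e₁, X₂(x, y, z) = e^{y+z}·(e₂ − e₁), X₃(x, y, z) = e^{z}·(e₃ − e₂) pairwise commute ([X_i, X_j] = 0 for all i, j), and at every point of ℝ³ their values are linearly independent, so the abelian Lie algebra they span has geometric rank 3. -/
set_option maxHeartbeats 1000000
set_option synthInstance.maxHeartbeats 400000

noncomputable section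

private lemma key' (L : (Fin 3 → ℝ) →L[ℝ] ℝ) (c : Fin 3 → ℝ) (x : Fin 3 → ℝ) :
    fderiv ℝ (fun p => Real.exp (L p) • c) x
      = (Real.exp (L x) • (L : (Fin 3 → ℝ) →L[ℝ] ℝ)).smulRight c :=
  ((L.hasFDerivAt.exp).smul_const c).fderiv

private lemma brk (La Lb : (Fin 3 → ℝ) →L[ℝ] ℝ) (ca cb : Fin 3 → ℝ)
    (hab : Lb ca = 0) (hba : La cb = 0) :
    VectorField.lieBracket ℝ (fun p => Real.exp (La p) • ca)
      (fun p => Real.exp (Lb p) • cb) = 0 := by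
  funext x
  simp [VectorField.lieBracket, key', hab, hba, map_smul]

private def LL : Fin 3 → ((Fin 3 → ℝ) →L[ℝ] ℝ) :=
  ![(ContinuousLinearMap.proj (0 : Fin 3) : (Fin 3 → ℝ) →L[ℝ] ℝ)
      + (ContinuousLinearMap.proj (1 : Fin 3) : (Fin 3 → ℝ) →L[ℝ] ℝ)
      + (ContinuousLinearMap.proj (2 : Fin 3) : (Fin 3 → ℝ) →L[ℝ] ℝ),
    (ContinuousLinearMap.proj (1 : Fin 3) : (Fin 3 → ℝ) →L[ℝ] ℝ)
      + (ContinuousLinearMap.proj (2 : Fin 3) : (Fin 3 → ℝ) →L[ℝ] ℝ),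
    (ContinuousLinearMap.proj (2 : Fin 3) : (Fin 3 → ℝ) →L[ℝ] ℝ)]

private def CC : Fin 3 → (Fin 3 → ℝ) :=
  ![(Pi.single 0 (1 : ℝ) : Fin 3 → ℝ),
    (Pi.single 1 (1 : ℝ) : Fin 3 → ℝ) - (Pi.single 0 (1 : ℝ) : Fin 3 → ℝ),
    (Pi.single 2 (1 : ℝ) : Fin 3 → ℝ) - (Pi.single 1 (1 : ℝ) : Fin 3 → ℝ)]

private lemma LC : ∀ i j : Fin 3, i ≠ j → LL i (CC j) = 0 := by
  intro i j _
  fin_cases i <;> fin_cases j <;>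
    simp_all [LL, CC, Pi.single_apply]

/-- The three vector fields `e^{x+y+z} ∂_x`, `e^{y+z} (∂_y − ∂_x)`, `e^{z} (∂_z − ∂_y)` on
`ℝ³` pairwise commute, and their values at every point are linearly independent; hence the
abelian Lie algebra they span has geometric rank `3`. -/
theorem exp_root_fields_commute_and_rank_three
    (X : Fin 3 → ((Fin 3 → ℝ) → (Fin 3 → ℝ)))
    (hX : X = ![fun p => Real.exp (p 0 + p 1 + p 2) • (Pi.single 0 (1 : ℝ) : Fin 3 → ℝ),
      fun p => Real.exp (p 1 + p 2) •
        ((Pi.single 1 (1 : ℝ) : Fin 3 → ℝ) - (Pi.single 0 (1 : ℝ) : Fin 3 → ℝ)),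
      fun p => Real.exp (p 2) •
        ((Pi.single 2 (1 : ℝ) : Fin 3 → ℝ) - (Pi.single 1 (1 : ℝ) : Fin 3 → ℝ))]) :
    (∀ i j : Fin 3, VectorField.lieBracket ℝ (X i) (X j) = 0) ∧
    (∀ p : Fin 3 → ℝ, LinearIndependent ℝ (fun i => X i p)) ∧
    (∀ p : Fin 3 → ℝ,
      Module.finrank ℝ (Submodule.span ℝ (Set.range fun i => X i p)) = 3) := by
  have hXe : ∀ i : Fin 3, X i = fun p => Real.exp (LL i p) • CC i := by
    intro i
    subst hX
    fin_cases i <;> (funext p; simp [LL, CC])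
  have hli : ∀ p : Fin 3 → ℝ, LinearIndependent ℝ (fun i => X i p) := by
    intro p
    apply (Matrix.linearIndependent_rows_iff_isUnit
      (A := Matrix.of fun i j => X i p j)).mpr
    rw [Matrix.isUnit_iff_isUnit_det, isUnit_iff_ne_zero, Matrix.det_fin_three]
    simp only [Matrix.of_apply, hXe, LL, CC, Matrix.cons_val_zero, Matrix.cons_val_one,
      Matrix.head_cons, Matrix.cons_val_two, Matrix.tail_cons, Pi.smul_apply, Pi.sub_apply,
      Pi.single_apply, smul_eq_mul, ContinuousLinearMap.add_apply, ContinuousLinearMap.proj_apply]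
    norm_num [show ((2:Fin 3) = 1) = False by simp [Fin.ext_iff],
      show ((2:Fin 3) = 0) = False by simp [Fin.ext_iff],
      show ((1:Fin 3) = 2) = False by simp [Fin.ext_iff],
      show ((0:Fin 3) = 2) = False by simp [Fin.ext_iff]]
  refine ⟨?_, hli, ?_⟩
  · intro i j
    by_cases hij : i = j
    · subst hij
      funext x
      simp [VectorField.lieBracket]
    · rw [hXe i, hXe j]
      exact brk _ _ _ _ (LC j i (Ne.symm hij)) (LC i j hij)
  · intro p
    rw [finrank_span_eq_card (hli p)]
    simp
end
end
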